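/- arXiv:1312.0933 — 4 statements merged into one kernel-verified Lean document; each statement's English description precedes it below -/
import Mathlib

section
/- Let ρ > 0 and let (a^(n))_{n≥1} be a sequence where a^(n) = (a^(n)_1, ..., a^(n)_{d_n}) ∈ ℂ^{d_n} has i.i.d. coordinates with common distribution P satisfying P{z : log|z| > R} = O(R^{-ρ}) as R → ∞ and having bounded density with respect to Lebesgue measure on ℂ. Assume d_n ≤ C n^m for some constants C, m, and ρ(1-ε) > m+1 for some ε ∈ (0,1). Then almost surely (1/n) log ‖a^(n)‖ → 0 as n → ∞, where ‖·‖ is the ℓ² norm. -/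
/-!
Only the first Borel–Cantelli lemma is needed. Fix `c > 0`. By the tail bound and a union bound
over the `d n ≤ Cd n^m` coordinates, `P(max_j ‖a⟨n,j⟩‖ > e^{cn}) ≲ n^{m-ρ}`, which is summable as
`ρ > m + 1`; by the bounded density, `P(min_j ‖a⟨n,j⟩‖ < e^{-cn}) ≲ n^m e^{-2cn}`, also summable.
So almost surely all coordinates eventually lie in `[e^{-cn}, e^{cn}]`, whence
`|log ‖a^(n)‖| ≤ cn + (log d n) / 2`, and `c` can be taken arbitrarily small along `1/(k+1)`.
-/

open MeasureTheory Filter ProbabilityTheory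
open Real
open scoped ENNReal

theorem ae_eventually_notMem_of_summable {α : Type*} [MeasurableSpace α] {μ : Measure α}
    {s : ℕ → Set α} {f : ℕ → ℝ} (hf : Summable f)
    (hs : ∀ᶠ n in atTop, μ (s n) ≤ ENNReal.ofReal (f n)) :
    ∀ᵐ x ∂μ, ∀ᶠ n in atTop, x ∉ s n := by
  obtain ⟨N, hN⟩ := eventually_atTop.1 hs
  have hsum : ∑' n, μ (s (n + N)) ≠ ∞ := by
    refine ne_top_of_le_ne_top ?_ (ENNReal.tsum_le_tsum fun n => hN (n + N) (Nat.le_add_left N n))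
    exact ENNReal.tsum_coe_ne_top_iff_summable.2 ((summable_nat_add_iff N).2 hf).toNNReal
  filter_upwards [ae_eventually_notMem hsum] with x hx
  rwa [← map_add_atTop_eq_nat N]

theorem ENNReal.ofReal_mul_ofReal_le {a a' b : ℝ} (ha : 0 ≤ a) (haa' : a ≤ a') :
    ENNReal.ofReal a * ENNReal.ofReal b ≤ ENNReal.ofReal (a' * b) := by
  rcases le_total b 0 with hb | hb
  · simp [ENNReal.ofReal_of_nonpos hb]
  · rw [← ENNReal.ofReal_mul ha]
    exact ENNReal.ofReal_le_ofReal (mul_le_mul_of_nonneg_right haa' hb)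

theorem ae_eventually_forall_notMem_of_summable {Ω E : Type*} [MeasurableSpace Ω]
    [MeasurableSpace E] {P : Measure Ω} {μ : Measure E} {ι : ℕ → Type*} [∀ n, Fintype (ι n)]
    {X : (Σ n, ι n) → Ω → E} (hX : ∀ i, AEMeasurable (X i) P) (hlaw : ∀ i, P.map (X i) = μ)
    {S : ℕ → Set E} (hS : ∀ n, MeasurableSet (S n)) {f : ℕ → ℝ} (hf : Summable f)
    (hbound : ∀ᶠ n in atTop, (Fintype.card (ι n) : ℝ≥0∞) * μ (S n) ≤ ENNReal.ofReal (f n)) :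
    ∀ᵐ ω ∂P, ∀ᶠ n in atTop, ∀ j, X ⟨n, j⟩ ω ∉ S n := by
  have hunion : ∀ n, P (⋃ j, X ⟨n, j⟩ ⁻¹' S n) ≤ Fintype.card (ι n) * μ (S n) := fun n =>
    calc P (⋃ j, X ⟨n, j⟩ ⁻¹' S n) ≤ ∑ j, P (X ⟨n, j⟩ ⁻¹' S n) := measure_iUnion_fintype_le _ _
      _ = Fintype.card (ι n) * μ (S n) := by
        simp [← Measure.map_apply_of_aemeasurable (hX _) (hS n), hlaw]
  filter_upwards [ae_eventually_notMem_of_summable hf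
    (hbound.mono fun n hn => (hunion n).trans hn)] with ω hω
  simpa only [Set.mem_iUnion, Set.mem_preimage, not_exists] using hω

theorem eventually_mul_pow_le_exp (K : ℝ) (m : ℕ) {c : ℝ} (hc : 0 < c) :
    ∀ᶠ n : ℕ in atTop, K * (n : ℝ) ^ m ≤ exp (c * n) := by
  have h := ((isLittleO_pow_exp_pos_mul_atTop m hc).const_mul_left K).bound one_pos
  filter_upwards [tendsto_natCast_atTop_atTop.eventually h] with n hn
  simpa [abs_of_pos (exp_pos _)] using (le_abs_self _).trans hn

theorem abs_log_sqrt_sum_sq_le {ι : Type*} [Fintype ι] {x : ι → ℝ} {t : ℝ} (ht : 0 ≤ t)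
    (hlo : ∀ i, exp (-t) ≤ x i) (hhi : ∀ i, x i ≤ exp t) :
    |log (sqrt (∑ i, x i ^ 2))| ≤ t + log (Fintype.card ι) / 2 := by
  rcases isEmpty_or_nonempty ι with hι | hι
  · simpa using ht
  have i₀ : ι := Classical.arbitrary ι
  have hsq (s : ℝ) : exp s ^ 2 = exp (2 * s) := by rw [← exp_nat_mul]; norm_num
  have hlower : exp (-(2 * t)) ≤ ∑ i, x i ^ 2 := by
    rw [← mul_neg, ← hsq]
    exact (pow_le_pow_left₀ (exp_pos _).le (hlo i₀) 2).trans
      (Finset.single_le_sum (fun i _ => sq_nonneg (x i)) (Finset.mem_univ i₀))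
  have hupper : ∑ i, x i ^ 2 ≤ Fintype.card ι * exp (2 * t) := by
    simpa [hsq] using Finset.sum_le_sum fun i (_ : i ∈ Finset.univ) =>
      pow_le_pow_left₀ ((exp_pos _).le.trans (hlo i)) (hhi i) 2
  have hpos : 0 < ∑ i, x i ^ 2 := (exp_pos _).trans_le hlower
  have hlog_lower : -(2 * t) ≤ log (∑ i, x i ^ 2) := (le_log_iff_exp_le hpos).2 hlower
  have hlog_upper : log (∑ i, x i ^ 2) ≤ log (Fintype.card ι) + 2 * t := by
    simpa [log_mul, Fintype.card_ne_zero] using log_le_log hpos hupper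
  have hlog_card : 0 ≤ log (Fintype.card ι) := log_nonneg (by exact_mod_cast Fintype.card_pos)
  rw [log_sqrt hpos.le, abs_le]
  constructor <;> linarith

theorem isLittleO_log_sqrt_sum_sq {d : ℕ → ℕ} {x : ∀ n, Fin (d n) → ℝ} {m : ℕ} {Cd : ℝ}
    (hd : ∀ n, (d n : ℝ) ≤ Cd * (n : ℝ) ^ m)
    (hx : ∀ k : ℕ, ∀ᶠ n : ℕ in atTop, ∀ j,
      exp (-((k + 1 : ℝ)⁻¹ * n)) ≤ x n j ∧ x n j ≤ exp ((k + 1 : ℝ)⁻¹ * n)) :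
    (fun n => log (sqrt (∑ j, x n j ^ 2))) =o[atTop] (fun n : ℕ => (n : ℝ)) := by
  refine Asymptotics.isLittleO_iff.2 fun c hc => ?_
  obtain ⟨k, hk⟩ := exists_nat_one_div_lt (half_pos hc)
  filter_upwards [hx k, eventually_mul_pow_le_exp Cd m hc] with n hxn hpoly
  have hlog_d : log (d n) ≤ c * n := by
    rcases (Nat.cast_nonneg (α := ℝ) (d n)).eq_or_lt with h | h
    · rw [← h, log_zero]; positivity
    · exact (log_le_iff_le_exp h).2 ((hd n).trans hpoly)
  calc ‖log (sqrt (∑ j, x n j ^ 2))‖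
      ≤ (k + 1 : ℝ)⁻¹ * n + log (d n) / 2 := by
        simpa using abs_log_sqrt_sum_sq_le (by positivity) (fun j => (hxn j).1) fun j => (hxn j).2
    _ ≤ c / 2 * n + c * n / 2 := by
        gcongr
        simpa using hk.le
    _ = c * ‖(n : ℝ)‖ := by rw [norm_natCast]; ring

theorem ae_eventually_forall_norm_le_exp {Ω : Type*} [MeasurableSpace Ω] {P : Measure Ω}
    {μ : Measure ℂ} {d : ℕ → ℕ} {a : (Σ n, Fin (d n)) → Ω → ℂ}
    (ha : ∀ i, AEMeasurable (a i) P) (hlaw : ∀ i, P.map (a i) = μ) {m : ℕ} {Cd : ℝ}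
    (hd : ∀ n, (d n : ℝ) ≤ Cd * (n : ℝ) ^ m) {ρ Ct R0 : ℝ} (hρ : (m : ℝ) + 1 < ρ)
    (htail : ∀ R ≥ R0, μ {z : ℂ | R < log ‖z‖} ≤ ENNReal.ofReal (Ct * R ^ (-ρ)))
    {c : ℝ} (hc : 0 < c) :
    ∀ᵐ ω ∂P, ∀ᶠ n : ℕ in atTop, ∀ j, ‖a ⟨n, j⟩ ω‖ ≤ exp (c * n) := by
  have hsum : Summable fun n : ℕ => Cd * Ct * c ^ (-ρ) * (n : ℝ) ^ ((m : ℝ) - ρ) :=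
    (summable_nat_rpow.2 (by linarith)).mul_left _
  have hR : ∀ᶠ n : ℕ in atTop, R0 ≤ c * n :=
    (tendsto_natCast_atTop_atTop.const_mul_atTop hc).eventually_ge_atTop R0
  refine (ae_eventually_forall_notMem_of_summable ha hlaw
    (S := fun n => {z | exp (c * n) < ‖z‖})
    (fun n => measurableSet_lt measurable_const measurable_norm) hsum ?_).mono
    fun ω hω => hω.mono fun n hn j => not_lt.1 (hn j)
  filter_upwards [hR, eventually_gt_atTop 0] with n hRn hn
  have hn' : (0 : ℝ) < n := Nat.cast_pos.2 hn
  calc (Fintype.card (Fin (d n)) : ℝ≥0∞) * μ {z | exp (c * n) < ‖z‖}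
      ≤ ENNReal.ofReal (d n) * ENNReal.ofReal (Ct * (c * n) ^ (-ρ)) := by
        rw [Fintype.card_fin, ENNReal.ofReal_natCast]
        gcongr
        refine (measure_mono fun z hz => ?_).trans (htail _ hRn)
        exact (lt_log_iff_exp_lt ((exp_pos _).trans hz)).2 hz
    _ ≤ ENNReal.ofReal (Cd * (n : ℝ) ^ m * (Ct * (c * n) ^ (-ρ))) :=
        ENNReal.ofReal_mul_ofReal_le (Nat.cast_nonneg _) (hd n)
    _ = ENNReal.ofReal (Cd * Ct * c ^ (-ρ) * (n : ℝ) ^ ((m : ℝ) - ρ)) := by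
        rw [mul_rpow hc.le hn'.le, sub_eq_add_neg, rpow_add hn', rpow_natCast]
        ring_nf

theorem ae_eventually_forall_exp_neg_le_norm {Ω : Type*} [MeasurableSpace Ω] {P : Measure Ω}
    {μ : Measure ℂ} {d : ℕ → ℕ} {a : (Σ n, Fin (d n)) → Ω → ℂ}
    (ha : ∀ i, AEMeasurable (a i) P) (hlaw : ∀ i, P.map (a i) = μ) {m : ℕ} {Cd : ℝ}
    (hd : ∀ n, (d n : ℝ) ≤ Cd * (n : ℝ) ^ m) {C : ℝ} {φ : ℂ → ℝ} (hφ : ∀ z, φ z ≤ C)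
    (hμ : μ = volume.withDensity fun z => ENNReal.ofReal (φ z)) {c : ℝ} (hc : 0 < c) :
    ∀ᵐ ω ∂P, ∀ᶠ n : ℕ in atTop, ∀ j, exp (-(c * n)) ≤ ‖a ⟨n, j⟩ ω‖ := by
  have hμC : μ ≤ ENNReal.ofReal C • volume := by
    rw [hμ, ← withDensity_const]
    exact withDensity_mono (.of_forall fun z => ENNReal.ofReal_le_ofReal (hφ z))
  have hsum : Summable fun n : ℕ => Cd * C * π * ((n : ℝ) ^ m * exp (-(2 * c)) ^ n) := by
    refine (summable_pow_mul_geometric_of_norm_lt_one (R := ℝ) m ?_).mul_left _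
    rw [norm_of_nonneg (exp_pos _).le, exp_lt_one_iff, neg_lt_zero]
    linarith
  refine (ae_eventually_forall_notMem_of_summable ha hlaw
    (S := fun n => Metric.ball 0 (exp (-(c * n)))) (fun n => measurableSet_ball) hsum
    (.of_forall fun n => ?_)).mono fun ω hω => hω.mono fun n hn j => ?_
  · calc (Fintype.card (Fin (d n)) : ℝ≥0∞) * μ (Metric.ball 0 (exp (-(c * n))))
        ≤ ENNReal.ofReal (d n) * ENNReal.ofReal (C * (π * exp (-(c * n)) ^ 2)) := by
          rw [Fintype.card_fin, ENNReal.ofReal_natCast, ENNReal.ofReal_mul' (by positivity),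
            ENNReal.ofReal_mul pi_pos.le, ENNReal.ofReal_pow (exp_pos _).le]
          gcongr
          refine (hμC _).trans_eq ?_
          simp [mul_comm, ← NNReal.coe_real_pi]
      _ ≤ ENNReal.ofReal (Cd * (n : ℝ) ^ m * (C * (π * exp (-(c * n)) ^ 2))) :=
          ENNReal.ofReal_mul_ofReal_le (Nat.cast_nonneg _) (hd n)
      _ = ENNReal.ofReal (Cd * C * π * ((n : ℝ) ^ m * exp (-(2 * c)) ^ n)) := by
          rw [← exp_nat_mul, ← exp_nat_mul]
          ring_nf
  · simpa using hn j

theorem stmt_2_general {Ω : Type*} [MeasurableSpace Ω] (P : Measure Ω)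
    (m : ℕ) (Cd : ℝ) (d : ℕ → ℕ) (hd : ∀ n, (d n : ℝ) ≤ Cd * (n : ℝ) ^ m)
    (ρ ε : ℝ) (hε0 : 0 < ε) (hε1 : ε < 1) (hρ : (m : ℝ) + 1 < ρ * (1 - ε))
    (μ : Measure ℂ)
    -- tail bound: μ{z : log|z| > R} = O(R^{-ρ}) as R → ∞
    (Ct R0 : ℝ)
    (htail : ∀ R ≥ R0, μ {z : ℂ | R < Real.log ‖z‖} ≤ ENNReal.ofReal (Ct * R ^ (-ρ)))
    -- bounded density with respect to Lebesgue measure on ℂ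
    (C : ℝ) (φd : ℂ → ℝ) (hφd : ∀ z, 0 ≤ φd z ∧ φd z ≤ C)
    (hμd : μ = volume.withDensity fun z => ENNReal.ofReal (φd z))
    -- the i.i.d. coefficients
    (a : (Σ n : ℕ, Fin (d n)) → Ω → ℂ)
    (hmeas : ∀ i, Measurable (a i))
    (hlaw : ∀ i, Measure.map (a i) P = μ) :
    ∀ᵐ ω ∂P,
      Tendsto
        (fun n : ℕ =>
          (1 / (n : ℝ)) * Real.log (Real.sqrt (∑ j : Fin (d n), ‖a ⟨n, j⟩ ω‖ ^ 2)))
        atTop (nhds 0) := by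
  have hρ' : (m : ℝ) + 1 < ρ := by nlinarith [(m.cast_nonneg : (0 : ℝ) ≤ m)]
  have ha : ∀ i, AEMeasurable (a i) P := fun i => (hmeas i).aemeasurable
  have hbounds : ∀ᵐ ω ∂P, ∀ k : ℕ, ∀ᶠ n : ℕ in atTop, ∀ j,
      exp (-((k + 1 : ℝ)⁻¹ * n)) ≤ ‖a ⟨n, j⟩ ω‖ ∧ ‖a ⟨n, j⟩ ω‖ ≤ exp ((k + 1 : ℝ)⁻¹ * n) := by
    refine ae_all_iff.2 fun k => ?_
    filter_upwards [ae_eventually_forall_exp_neg_le_norm ha hlaw hd (fun z => (hφd z).2) hμd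
      (c := (k + 1 : ℝ)⁻¹) (by positivity),
      ae_eventually_forall_norm_le_exp ha hlaw hd hρ' htail (c := (k + 1 : ℝ)⁻¹)
      (by positivity)] with ω hlo hup
    exact (hlo.and hup).mono fun n h j => ⟨h.1 j, h.2 j⟩
  filter_upwards [hbounds] with ω hω
  simpa only [one_div_mul_eq_div] using
    (isLittleO_log_sqrt_sum_sq hd hω).tendsto_div_nhds_zero

theorem stmt_2 {Ω : Type*} [MeasurableSpace Ω] (P : Measure Ω) [IsProbabilityMeasure P]
    (m : ℕ) (Cd : ℝ) (d : ℕ → ℕ) (hd : ∀ n, (d n : ℝ) ≤ Cd * (n : ℝ) ^ m)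
    (ρ ε : ℝ) (hε0 : 0 < ε) (hε1 : ε < 1) (hρ : (m : ℝ) + 1 < ρ * (1 - ε))
    (μ : Measure ℂ) [IsProbabilityMeasure μ]
    -- tail bound: μ{z : log|z| > R} = O(R^{-ρ}) as R → ∞
    (Ct R0 : ℝ)
    (htail : ∀ R ≥ R0, μ {z : ℂ | R < Real.log ‖z‖} ≤ ENNReal.ofReal (Ct * R ^ (-ρ)))
    -- bounded density with respect to Lebesgue measure on ℂ
    (C : ℝ) (φd : ℂ → ℝ) (hφd : ∀ z, 0 ≤ φd z ∧ φd z ≤ C)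
    (hμd : μ = volume.withDensity fun z => ENNReal.ofReal (φd z))
    -- the i.i.d. coefficients
    (a : (Σ n : ℕ, Fin (d n)) → Ω → ℂ)
    (hmeas : ∀ i, Measurable (a i))
    (hindep : iIndepFun a P)
    (hlaw : ∀ i, Measure.map (a i) P = μ) :
    ∀ᵐ ω ∂P,
      Tendsto
        (fun n : ℕ =>
          (1 / (n : ℝ)) * Real.log (Real.sqrt (∑ j : Fin (d n), ‖a ⟨n, j⟩ ω‖ ^ 2)))
        atTop (nhds 0) :=
  stmt_2_general P m Cd d hd ρ ε hε0 hε1 hρ μ Ct R0 htail C φd hφd hμd a hmeas hlaw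
end

section
/- Let u ∈ ℂ^d be a unit vector, and let a ∈ ℂ^d have i.i.d. coordinates with common law P satisfying P{z : log|z| > R} ≤ C R^{-ρ} for large R, with ρ > 1. Then for every T > 0 large enough, the integral of log|⟨a,u⟩| over the event {log|⟨a,u⟩| > T} is at most C'·d·T^{1-ρ} for a constant C' depending only on C and ρ. -/
/-! If `log ‖∑ aⱼ uⱼ‖ > s ≥ 0` with all `‖uⱼ‖ ≤ 1`, then some coordinate has
`log ‖aⱼ‖ > s - log d`. A union bound over the coordinates turns the tail hypothesis into
`P(log ‖⟨a, u⟩‖ > s) ≤ d C 2^ρ s^(-ρ)` as soon as `s ≥ 2 log d`, and the layer-cake formula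
`∫_{X > T} X = T P(X > T) + ∫_T^∞ P(X > t) dt` then gives the bound with
`C' = ρ / (ρ - 1) · C · 2^ρ`. -/

open MeasureTheory Real Set

section TailIntegral

variable {α : Type*} [MeasurableSpace α] {ν : Measure α} {f : α → ℝ} {A T ρ : ℝ}

lemma lintegral_Ioi_ofReal_mul_rpow_neg (hA : 0 ≤ A) (hT : 0 < T) (hρ : 1 < ρ) :
    ∫⁻ t in Ioi T, ENNReal.ofReal (A * t ^ (-ρ))
      = ENNReal.ofReal (A * T ^ (1 - ρ) / (ρ - 1)) := by
  have hint : IntegrableOn (fun t : ℝ => A * t ^ (-ρ)) (Ioi T) :=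
    (integrableOn_Ioi_rpow_of_lt (by linarith) hT).const_mul A
  have hnn : 0 ≤ᵐ[volume.restrict (Ioi T)] fun t : ℝ => A * t ^ (-ρ) :=
    (ae_restrict_iff' measurableSet_Ioi).2 <| ae_of_all _ fun t ht =>
      mul_nonneg hA (rpow_nonneg (hT.trans ht).le _)
  rw [← ofReal_integral_eq_lintegral_ofReal hint hnn, integral_const_mul,
    integral_Ioi_rpow_of_lt (by linarith) hT, show -ρ + 1 = 1 - ρ by ring,
    show ρ - 1 = -(1 - ρ) by ring, div_neg, neg_div, mul_neg, mul_div_assoc]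

theorem setLIntegral_lt_le_of_tail_le (hf : Measurable f) (hA : 0 ≤ A) (hT : 0 < T) (hρ : 1 < ρ)
    (htail : ∀ t ≥ T, ν {x | t < f x} ≤ ENNReal.ofReal (A * t ^ (-ρ))) :
    ∫⁻ x in {x | T < f x}, ENNReal.ofReal (f x) ∂ν
      ≤ ENNReal.ofReal (ρ / (ρ - 1) * A * T ^ (1 - ρ)) := by
  set S := {x | T < f x}
  have hS : MeasurableSet S := measurableSet_lt measurable_const hf
  have hnn : 0 ≤ᵐ[ν.restrict S] f :=
    (ae_restrict_iff' hS).2 <| ae_of_all _ fun x (hx : T < f x) => (hT.trans hx).le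
  rw [lintegral_eq_lintegral_meas_lt _ hnn hf.aemeasurable, ← Ioc_union_Ioi_eq_Ioi hT.le,
    lintegral_union measurableSet_Ioi Ioc_disjoint_Ioi_same]
  have hlow : ∫⁻ t in Ioc 0 T, ν.restrict S {x | t < f x}
      ≤ ENNReal.ofReal (A * T ^ (1 - ρ)) :=
    calc ∫⁻ t in Ioc 0 T, ν.restrict S {x | t < f x}
        ≤ ∫⁻ _ in Ioc 0 T, ENNReal.ofReal (A * T ^ (-ρ)) :=
          setLIntegral_mono measurable_const fun t _ =>
            ((measure_mono (subset_univ _)).trans_eq (Measure.restrict_apply_univ S)).trans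
              (htail T le_rfl)
      _ = ENNReal.ofReal (A * T ^ (1 - ρ)) := by
          rw [setLIntegral_const, Real.volume_Ioc, sub_zero,
            ← ENNReal.ofReal_mul (by positivity), rpow_sub hT, rpow_one, rpow_neg hT.le]
          field_simp
  have hhigh : ∫⁻ t in Ioi T, ν.restrict S {x | t < f x}
      ≤ ENNReal.ofReal (A * T ^ (1 - ρ) / (ρ - 1)) :=
    calc ∫⁻ t in Ioi T, ν.restrict S {x | t < f x}
        ≤ ∫⁻ t in Ioi T, ENNReal.ofReal (A * t ^ (-ρ)) :=
          setLIntegral_mono (by fun_prop) fun t ht =>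
            (Measure.restrict_apply_le _ _).trans (htail t (le_of_lt ht))
      _ = _ := lintegral_Ioi_ofReal_mul_rpow_neg hA hT hρ
  calc _ ≤ ENNReal.ofReal (A * T ^ (1 - ρ)) + ENNReal.ofReal (A * T ^ (1 - ρ) / (ρ - 1)) :=
        add_le_add hlow hhigh
    _ = ENNReal.ofReal (ρ / (ρ - 1) * A * T ^ (1 - ρ)) := by
        have : 0 < ρ - 1 := by linarith
        rw [← ENNReal.ofReal_add (by positivity) (by positivity)]
        congr 1
        field_simp
        ring

theorem setIntegral_lt_le_of_tail_le (hf : Measurable f) (hA : 0 ≤ A) (hT : 0 < T) (hρ : 1 < ρ)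
    (htail : ∀ t ≥ T, ν {x | t < f x} ≤ ENNReal.ofReal (A * t ^ (-ρ))) :
    ∫ x in {x | T < f x}, f x ∂ν ≤ ρ / (ρ - 1) * A * T ^ (1 - ρ) := by
  have hS : MeasurableSet {x | T < f x} := measurableSet_lt measurable_const hf
  have hnn : 0 ≤ᵐ[ν.restrict {x | T < f x}] f :=
    (ae_restrict_iff' hS).2 <| ae_of_all _ fun x (hx : T < f x) => (hT.trans hx).le
  have : 0 < ρ - 1 := by linarith
  rw [integral_eq_lintegral_of_nonneg_ae hnn hf.aestronglyMeasurable]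
  exact ENNReal.toReal_le_of_le_ofReal (by positivity)
    (setLIntegral_lt_le_of_tail_le hf hA hT hρ htail)

end TailIntegral

lemma norm_le_one_of_sum_sq_norm_eq_one {ι E : Type*} [Fintype ι] [SeminormedAddGroup E]
    {u : ι → E} (hu : ∑ j, ‖u j‖ ^ 2 = 1) (j : ι) : ‖u j‖ ≤ 1 := by
  have : ‖u j‖ ^ 2 ≤ 1 :=
    hu ▸ Finset.single_le_sum (f := fun j => ‖u j‖ ^ 2) (fun _ _ => sq_nonneg _)
      (Finset.mem_univ j)
  exact (sq_le_one_iff₀ (norm_nonneg _)).1 this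

section UnionBound

variable {ι 𝕜 : Type*} [Fintype ι] [SeminormedRing 𝕜] {u : ι → 𝕜}

lemma norm_sum_mul_le_card_mul (hu : ∀ j, ‖u j‖ ≤ 1) {a : ι → 𝕜} {r : ℝ}
    (ha : ∀ j, ‖a j‖ ≤ r) : ‖∑ j, a j * u j‖ ≤ Fintype.card ι * r :=
  calc ‖∑ j, a j * u j‖ ≤ ∑ j, ‖a j‖ * ‖u j‖ :=
        (norm_sum_le _ _).trans (Finset.sum_le_sum fun j _ => norm_mul_le _ _)
    _ ≤ ∑ _j : ι, r :=
        Finset.sum_le_sum fun j _ => (mul_le_of_le_one_right (norm_nonneg _) (hu j)).trans (ha j)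
    _ = Fintype.card ι * r := by rw [Finset.sum_const, Finset.card_univ, nsmul_eq_mul]

-- For `s < 0` the left side contains every `a` with `∑ j, a j * u j = 0`, as `log 0 = 0`.
lemma setOf_lt_log_norm_sum_mul_subset [Nonempty ι] (hu : ∀ j, ‖u j‖ ≤ 1) {s : ℝ}
    (hs : 0 ≤ s) :
    {a : ι → 𝕜 | s < log ‖∑ j, a j * u j‖}
      ⊆ ⋃ j, (fun a => a j) ⁻¹' {z | s - log (Fintype.card ι) < log ‖z‖} := by
  intro a (ha : s < log ‖∑ j, a j * u j‖)
  have hcard : (0 : ℝ) < Fintype.card ι := by exact_mod_cast Fintype.card_pos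
  have hpos : 0 < ‖∑ j, a j * u j‖ := by
    refine (norm_nonneg _).lt_of_ne fun h0 => ?_
    rw [← h0, log_zero] at ha
    linarith
  by_contra hmem
  simp only [mem_iUnion, mem_preimage, mem_ofPred_eq, not_exists, not_lt] at hmem
  have hle : ‖∑ j, a j * u j‖ ≤ exp s := by
    calc ‖∑ j, a j * u j‖ ≤ Fintype.card ι * exp (s - log (Fintype.card ι)) :=
          norm_sum_mul_le_card_mul hu fun j => (le_exp_log _).trans (exp_le_exp.2 (hmem j))
      _ = exp s := by rw [exp_sub, exp_log hcard]; field_simp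
  exact ha.not_ge ((log_le_log hpos hle).trans_eq (log_exp s))

variable [MeasurableSpace 𝕜]

theorem measure_pi_lt_log_norm_sum_mul_le [Nonempty ι] (μ : ι → Measure 𝕜)
    [∀ i, IsProbabilityMeasure (μ i)] (hu : ∀ j, ‖u j‖ ≤ 1) {s : ℝ} (hs : 0 ≤ s) :
    Measure.pi μ {a | s < log ‖∑ j, a j * u j‖}
      ≤ ∑ j, μ j {z | s - log (Fintype.card ι) < log ‖z‖} :=
  calc _ ≤ Measure.pi μ (⋃ j, (fun a => a j) ⁻¹' {z | s - log (Fintype.card ι) < log ‖z‖}) :=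
        measure_mono (setOf_lt_log_norm_sum_mul_subset hu hs)
    _ ≤ ∑ j, Measure.pi μ ((fun a => a j) ⁻¹' {z | s - log (Fintype.card ι) < log ‖z‖}) :=
        measure_iUnion_fintype_le _ _
    _ ≤ ∑ j, μ j {z | s - log (Fintype.card ι) < log ‖z‖} :=
        Finset.sum_le_sum fun j _ =>
          (Measure.le_map_apply (measurable_pi_apply j).aemeasurable _).trans_eq
            (by rw [(measurePreserving_eval μ j).map_eq])

lemma measure_pi_lt_log_norm_sum_mul_le_rpow [Nonempty ι] (μ : Measure 𝕜)
    [IsProbabilityMeasure μ] (hu : ∀ j, ‖u j‖ ≤ 1) {C ρ R₀ s : ℝ} (hC : 0 ≤ C) (hρ : 0 ≤ ρ)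
    (htail : ∀ R ≥ R₀, μ {z | R < log ‖z‖} ≤ ENNReal.ofReal (C * R ^ (-ρ)))
    (hsR : 2 * R₀ ≤ s) (hsι : 2 * log (Fintype.card ι) ≤ s) (hs : 0 < s) :
    Measure.pi (fun _ : ι => μ) {a | s < log ‖∑ j, a j * u j‖}
      ≤ ENNReal.ofReal (Fintype.card ι * C * 2 ^ ρ * s ^ (-ρ)) :=
  calc _ ≤ ∑ _j : ι, μ {z | s - log (Fintype.card ι) < log ‖z‖} :=
        measure_pi_lt_log_norm_sum_mul_le _ hu hs.le
    _ = Fintype.card ι * μ {z | s - log (Fintype.card ι) < log ‖z‖} := by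
        rw [Finset.sum_const, Finset.card_univ, nsmul_eq_mul]
    _ ≤ Fintype.card ι * ENNReal.ofReal (C * (s / 2) ^ (-ρ)) := by
        gcongr
        refine (htail _ (by linarith)).trans (ENNReal.ofReal_le_ofReal ?_)
        exact mul_le_mul_of_nonneg_left
          (rpow_le_rpow_of_nonpos (by positivity) (by linarith) (neg_nonpos.2 hρ)) hC
    _ = ENNReal.ofReal (Fintype.card ι * C * 2 ^ ρ * s ^ (-ρ)) := by
        rw [← ENNReal.ofReal_natCast, ← ENNReal.ofReal_mul (by positivity),
          div_rpow hs.le zero_le_two, rpow_neg zero_le_two]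
        congr 1
        field_simp

end UnionBound

theorem stmt_4 (C ρ : ℝ) (hC : 0 < C) (hρ : 1 < ρ) :
    ∃ C' > (0 : ℝ), ∀ (d : ℕ), 0 < d →
      ∀ (μ : Measure ℂ), IsProbabilityMeasure μ →
      ∀ R0 : ℝ,
        (∀ R ≥ R0, μ {z : ℂ | R < Real.log ‖z‖} ≤ ENNReal.ofReal (C * R ^ (-ρ))) →
      ∀ u : Fin d → ℂ, (∑ j, ‖u j‖ ^ 2) = 1 →
      ∃ T0 : ℝ, 0 < T0 ∧ ∀ T ≥ T0,
        (∫ a in {a : Fin d → ℂ | T < Real.log ‖∑ j, a j * u j‖},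
            Real.log ‖∑ j, a j * u j‖ ∂(Measure.pi fun _ : Fin d => μ))
          ≤ C' * d * T ^ (1 - ρ) := by
  have hρ1 : 0 < ρ - 1 := sub_pos.2 hρ
  refine ⟨ρ / (ρ - 1) * C * 2 ^ ρ, by positivity, fun d hd μ _ R0 htail u hu => ?_⟩
  have : Nonempty (Fin d) := Fin.pos_iff_nonempty.1 hd
  refine ⟨max (max (2 * R0) (2 * log d)) 1, by positivity, fun T hT => ?_⟩
  obtain ⟨⟨hTR, hTd⟩, hT1⟩ : (2 * R0 ≤ T ∧ 2 * log d ≤ T) ∧ 1 ≤ T := by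
    simpa only [ge_iff_le, max_le_iff] using hT
  have hpi_tail : ∀ t ≥ T, Measure.pi (fun _ : Fin d => μ) {a | t < log ‖∑ j, a j * u j‖}
      ≤ ENNReal.ofReal (d * C * 2 ^ ρ * t ^ (-ρ)) := fun t ht => by
    simpa using measure_pi_lt_log_norm_sum_mul_le_rpow μ
      (norm_le_one_of_sum_sq_norm_eq_one hu) hC.le (by linarith) htail (by linarith)
      (by rw [Fintype.card_fin]; linarith) (by linarith)
  calc _ ≤ ρ / (ρ - 1) * (d * C * 2 ^ ρ) * T ^ (1 - ρ) :=
        setIntegral_lt_le_of_tail_le (by fun_prop) (by positivity) (by linarith) hρ hpi_tail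
    _ = _ := by ring
end

section
/- Let X_n be a sequence of independent, uniformly bounded, nonpositive real random variables with E[X_n] → 0. Then almost surely there exists a subsequence of indices (n_j) of relative density one along which X_{n_j} → 0. -/
/-!
Chebyshev's inequality bounds the probability that the partial sum `S_{m²}` deviates from its
mean by `ε m²` by `M² / (ε² m²)`, which is summable, so by Borel–Cantelli `(S_{m²} - E S_{m²}) / m² → 0`
almost surely; bounded increments fill the gaps between squares, and the Cesàro means of `E X_n`
tend to `0`, so almost surely `(1/n) Σ_{k<n} |X_k| → 0`. For such a sequence Markov's inequality
shows that each set `{k | 1/(m+1) < |X_k|}` has density zero. Discarding it only beyond a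
threshold `N_m` chosen so that its counting function is at most `n / 2^m` for `n ≥ N_m`, the
union of the discarded pieces still has density zero, and enumerating the remaining indices
gives the subsequence.
-/

open MeasureTheory Filter ProbabilityTheory Finset Topology

def HasNatDensity (p : ℕ → Prop) [DecidablePred p] (d : ℝ) : Prop :=
  Tendsto (fun n : ℕ => (Nat.count p n : ℝ) / n) atTop (𝓝 d)

section Density

variable {p : ℕ → Prop} [DecidablePred p]

theorem HasNatDensity.not (h : HasNatDensity p 0) : HasNatDensity (fun k => ¬ p k) 1 := by
  have hsplit : ∀ n, (Nat.count (fun k => ¬ p k) n : ℝ) = n - Nat.count p n := by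
    intro n
    have := card_filter_add_card_filter_not (s := range n) p
    rw [card_range] at this
    rw [Nat.count_eq_card_filter_range, Nat.count_eq_card_filter_range, eq_sub_iff_add_eq,
      add_comm]
    exact_mod_cast this
  have h1 : Tendsto (fun n : ℕ => 1 - (Nat.count p n : ℝ) / n) atTop (𝓝 1) := by
    simpa using h.const_sub 1
  refine h1.congr' ?_
  filter_upwards [eventually_ge_atTop 1] with n hn
  rw [hsplit, sub_div, div_self (by positivity)]

theorem HasNatDensity.infinite (h : HasNatDensity p 1) : (Set.ofPred p).Infinite := by
  intro hfin
  have h0 : Tendsto (fun n : ℕ => (Nat.count p n : ℝ) / n) atTop (𝓝 0) :=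
    squeeze_zero (fun n => by positivity)
      (fun n => div_le_div_of_nonneg_right (Nat.cast_le.2 (Nat.count_le_card hfin n)) n.cast_nonneg)
      (tendsto_const_div_atTop_nhds_zero_nat _)
  exact one_ne_zero (tendsto_nhds_unique h h0)

theorem HasNatDensity.exists_strictMono_tendsto_div (h : HasNatDensity p 1) :
    ∃ n : ℕ → ℕ, StrictMono n ∧ (∀ j, 1 ≤ n j) ∧
      Tendsto (fun j : ℕ => (j : ℝ) / (n j : ℝ)) atTop (𝓝 1) ∧ ∀ j, p (n j) := by
  have hinf := h.infinite
  have he := Nat.nth_strictMono hinf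
  have hratio : Tendsto (fun i : ℕ => (i : ℝ) / Nat.nth p i) atTop (𝓝 1) :=
    (h.comp he.tendsto_atTop).congr fun i => by simp [Nat.count_nth_of_infinite hinf]
  refine ⟨fun j => Nat.nth p (j + 1), he.comp fun _ _ h => Nat.succ_lt_succ h,
    fun j => (Nat.zero_le _).trans_lt (he j.succ_pos), ?_, fun j => Nat.nth_mem_of_infinite hinf _⟩
  have := (tendsto_natCast_div_add_atTop (1 : ℝ)).mul ((tendsto_add_atTop_iff_nat 1).2 hratio)
  rw [one_mul] at this
  refine this.congr fun j => ?_
  push_cast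
  exact div_mul_div_cancel₀ (by positivity)

end Density

theorem mul_count_lt_abs_le_sum_abs (b : ℕ → ℝ) (ε : ℝ) (n : ℕ) :
    ε * Nat.count (fun k => ε < |b k|) n ≤ ∑ k ∈ range n, |b k| := by
  rw [Nat.count_eq_card_filter_range, mul_comm, ← nsmul_eq_mul, ← sum_const]
  calc ∑ k ∈ range n with ε < |b k|, ε ≤ ∑ k ∈ range n with ε < |b k|, |b k| :=
        sum_le_sum fun k hk => (mem_filter.1 hk).2.le
    _ ≤ ∑ k ∈ range n, |b k| :=
        sum_le_sum_of_subset_of_nonneg (filter_subset _ _) fun k _ _ => abs_nonneg _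

theorem hasNatDensity_lt_abs_zero {b : ℕ → ℝ}
    (hb : Tendsto (fun n : ℕ => (∑ k ∈ range n, |b k|) / n) atTop (𝓝 0)) {ε : ℝ} (hε : 0 < ε) :
    HasNatDensity (fun k => ε < |b k|) 0 := by
  refine squeeze_zero (fun n => by positivity) (fun n => ?_) ((hb.div_const ε).trans (by simp))
  rw [div_div, mul_comm (n : ℝ), ← div_div]
  gcongr
  rw [le_div_iff₀ hε, mul_comm]
  exact mul_count_lt_abs_le_sum_abs b ε n

section Diagonal

variable (A : ℕ → ℕ → Prop) [∀ m, DecidablePred (A m)]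

open Classical in
theorem count_exists_le_and_le {N : ℕ → ℕ} (hA : Monotone A)
    (hN : ∀ m, m < N m) (hcount : ∀ m n, N m ≤ n → (Nat.count (A m) n : ℝ) ≤ n * (1 / 2) ^ m)
    (J n : ℕ) :
    (Nat.count (fun k => ∃ m, N m ≤ k ∧ A m k) n : ℝ) ≤ N J + 2 * (1 / 2) ^ J * n := by
  set B : ℕ → Finset ℕ := fun m => {k ∈ range n | N m ≤ k ∧ A m k}
  have hcover : {k ∈ range n | ∃ m, N m ≤ k ∧ A m k} ⊆ range (N J) ∪ (Ico J n).biUnion B := by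
    intro k hk
    simp only [mem_filter, mem_range] at hk
    obtain ⟨hkn, m, hmk, hAmk⟩ := hk
    rcases lt_or_ge k (N J) with hkJ | hkJ
    · exact mem_union_left _ (mem_range.2 hkJ)
    refine mem_union_right _ (mem_biUnion.2 ?_)
    rcases le_or_gt J m with hJm | hmJ
    · exact ⟨m, mem_Ico.2 ⟨hJm, by linarith [hN m]⟩, by simp [B, *]⟩
    · exact ⟨J, mem_Ico.2 ⟨le_rfl, by linarith [hN J]⟩, by simp [B, hkn, hkJ, hA hmJ.le k hAmk]⟩
  have hB : ∀ m, (#(B m) : ℝ) ≤ n * (1 / 2) ^ m := by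
    intro m
    by_cases hmn : N m ≤ n
    · refine le_trans ?_ (hcount m n hmn)
      have hsub : B m ⊆ {k ∈ range n | A m k} := monotone_filter_right _ fun _ _ h => h.2
      rw [Nat.count_eq_card_filter_range]
      exact_mod_cast card_le_card hsub
    · have : B m = ∅ := filter_eq_empty_iff.2 fun k hk h => hmn (h.1.trans (mem_range.1 hk).le)
      simp [this]
  have hgeom : ∑ m ∈ Ico J n, ((1 : ℝ) / 2) ^ m ≤ 2 * (1 / 2) ^ J := by
    have := geom_sum_Ico_le_of_lt_one (m := J) (n := n) (by norm_num : (0 : ℝ) ≤ 1 / 2)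
      (by norm_num)
    norm_num at this ⊢
    linarith
  rw [Nat.count_eq_card_filter_range]
  calc (#{k ∈ range n | ∃ m, N m ≤ k ∧ A m k} : ℝ)
      ≤ #(range (N J)) + ∑ m ∈ Ico J n, (#(B m) : ℝ) := by
        exact_mod_cast (card_le_card hcover).trans
          ((card_union_le _ _).trans (add_le_add_right card_biUnion_le _))
    _ ≤ N J + ∑ m ∈ Ico J n, (n : ℝ) * (1 / 2) ^ m := by
        rw [card_range]
        gcongr with m
        exact hB m
    _ ≤ N J + 2 * (1 / 2) ^ J * n := by
        rw [← mul_sum]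
        nlinarith [n.cast_nonneg (α := ℝ)]

open Classical in
theorem exists_hasNatDensity_one_eventually_not (hA : Monotone A)
    (hdens : ∀ m, HasNatDensity (A m) 0) :
    ∃ G : ℕ → Prop, HasNatDensity G 1 ∧ ∀ m, ∀ᶠ k in atTop, G k → ¬ A m k := by
  have hN : ∀ m, ∃ N, m < N ∧ ∀ n, N ≤ n → (Nat.count (A m) n : ℝ) ≤ n * (1 / 2) ^ m := by
    intro m
    have hev : ∀ᶠ n : ℕ in atTop, (Nat.count (A m) n : ℝ) ≤ n * (1 / 2) ^ m ∧ m < n := by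
      filter_upwards [(hdens m).eventually (gt_mem_nhds (by positivity : (0 : ℝ) < (1 / 2) ^ m)),
        eventually_gt_atTop m] with n hn hmn
      refine ⟨?_, hmn⟩
      rw [div_lt_iff₀ (by exact_mod_cast (Nat.zero_le m).trans_lt hmn)] at hn
      linarith
    obtain ⟨N, hN⟩ := eventually_atTop.1 hev
    exact ⟨N, (hN N le_rfl).2, fun n hn => (hN n hn).1⟩
  choose N hNm hcount using hN
  refine ⟨fun k => ¬ ∃ m, N m ≤ k ∧ A m k, ?_, fun m => ?_⟩
  · convert HasNatDensity.not (p := fun k => ∃ m, N m ≤ k ∧ A m k) ?_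
    refine tendsto_order.2 ⟨fun a ha => Eventually.of_forall fun n => ha.trans_le (by positivity),
      fun ε hε => ?_⟩
    obtain ⟨J, hJ⟩ := exists_pow_lt_of_lt_one (by positivity : 0 < ε / 4)
      (by norm_num : (1 : ℝ) / 2 < 1)
    filter_upwards [(tendsto_const_div_atTop_nhds_zero_nat (N J : ℝ)).eventually
      (gt_mem_nhds (by positivity : 0 < ε / 2)), eventually_gt_atTop 0] with n hn hn0
    calc (Nat.count (fun k => ∃ m, N m ≤ k ∧ A m k) n : ℝ) / n
        ≤ (N J + 2 * (1 / 2) ^ J * n) / n := by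
          gcongr
          exact count_exists_le_and_le A hA hNm hcount J n
      _ = N J / n + 2 * (1 / 2) ^ J := by field_simp
      _ < ε := by linarith
  · filter_upwards [eventually_ge_atTop (N m)] with k hk hG hAk using hG ⟨m, hk, hAk⟩

end Diagonal

theorem exists_strictMono_tendsto_zero_of_tendsto_sum_abs_div {b : ℕ → ℝ}
    (hb : Tendsto (fun n : ℕ => (∑ k ∈ range n, |b k|) / n) atTop (𝓝 0)) :
    ∃ n : ℕ → ℕ, StrictMono n ∧ (∀ j, 1 ≤ n j) ∧
      Tendsto (fun j : ℕ => (j : ℝ) / (n j : ℝ)) atTop (𝓝 1) ∧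
      Tendsto (fun j : ℕ => b (n j)) atTop (𝓝 0) := by
  classical
  obtain ⟨G, hG, hGA⟩ :=
    exists_hasNatDensity_one_eventually_not (fun m k => 1 / ((m : ℝ) + 1) < |b k|)
      (fun _ _ him _ h => (one_div_le_one_div_of_le (by positivity) (by gcongr)).trans_lt h)
      (fun _ => hasNatDensity_lt_abs_zero hb (by positivity))
  obtain ⟨n, hn, hn1, hdens, hGn⟩ := hG.exists_strictMono_tendsto_div
  refine ⟨n, hn, hn1, hdens, Metric.tendsto_nhds.2 fun ε hε => ?_⟩
  obtain ⟨m, hm⟩ := exists_nat_one_div_lt hε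
  filter_upwards [hn.tendsto_atTop.eventually (hGA m)] with j hj
  rw [Real.dist_eq, sub_zero]
  exact (not_lt.1 (hj (hGn j))).trans_lt hm

theorem tendsto_sum_range_div_of_tendsto_sq {a : ℕ → ℝ} {C : ℝ} (ha : ∀ k, |a k| ≤ C)
    (h : Tendsto (fun m : ℕ => (∑ k ∈ range (m ^ 2), a k) / ((m ^ 2 : ℕ) : ℝ)) atTop (𝓝 0)) :
    Tendsto (fun n : ℕ => (∑ k ∈ range n, a k) / n) atTop (𝓝 0) := by
  set s : ℕ → ℝ := fun n => ∑ k ∈ range n, a k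
  have hincr : ∀ m n, m ≤ n → |s n - s m| ≤ C * (n - m) := by
    intro m n hmn
    simp only [s]
    rw [← sum_range_add_sum_Ico _ hmn, add_sub_cancel_left, ← Nat.cast_sub hmn, ← Nat.card_Ico,
      mul_comm, ← nsmul_eq_mul, ← sum_const]
    exact (abs_sum_le_sum_abs _ _).trans (sum_le_sum fun k _ => ha k)
  have hC : 0 ≤ C := (abs_nonneg _).trans (ha 0)
  have hbound : ∀ n, 1 ≤ n →
      |s n / n| ≤ |s (n.sqrt ^ 2) / ((n.sqrt ^ 2 : ℕ) : ℝ)| + 2 * C / n.sqrt := by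
    intro n hn
    set r := n.sqrt
    have hr : (0 : ℝ) < r := by exact_mod_cast Nat.sqrt_pos.2 hn
    have hrn : ((r : ℝ)) ^ 2 ≤ n := by exact_mod_cast Nat.sqrt_le' n
    have hnr : (n : ℝ) ≤ (r : ℝ) ^ 2 + 2 * r := by
      have := Nat.lt_succ_sqrt' n
      exact_mod_cast (by nlinarith : n ≤ r ^ 2 + 2 * r)
    have hsn : |s n| ≤ |s (r ^ 2)| + C * (2 * r) := by
      have := hincr _ _ (Nat.sqrt_le' n)
      push_cast at this
      nlinarith [abs_sub_abs_le_abs_sub (s n) (s (r ^ 2))]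
    calc |s n / n| = |s n| / n := by rw [abs_div, Nat.abs_cast]
      _ ≤ (|s (r ^ 2)| + C * (2 * r)) / r ^ 2 := by gcongr
      _ = |s (r ^ 2) / ((r ^ 2 : ℕ) : ℝ)| + 2 * C / r := by
          push_cast
          rw [abs_div, abs_of_pos (by positivity : (0 : ℝ) < r ^ 2)]
          field_simp
  have hsqrt : Tendsto Nat.sqrt atTop atTop :=
    tendsto_atTop_atTop.2 fun b => ⟨b ^ 2, fun n hn => Nat.le_sqrt'.2 hn⟩
  have hlim : Tendsto (fun n : ℕ => |s (n.sqrt ^ 2) / ((n.sqrt ^ 2 : ℕ) : ℝ)| + 2 * C / n.sqrt)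
      atTop (𝓝 0) := by
    simpa using (h.abs.comp hsqrt).add ((tendsto_const_div_atTop_nhds_zero_nat (2 * C)).comp hsqrt)
  exact squeeze_zero_norm' (eventually_atTop.2 ⟨1, hbound⟩) hlim

theorem ae_tendsto_zero_of_tsum_measure_le_abs_ne_top {Ω : Type*} [MeasurableSpace Ω]
    {μ : Measure Ω} {Y : ℕ → Ω → ℝ} (h : ∀ ε > 0, ∑' n, μ {ω | ε ≤ |Y n ω|} ≠ ⊤) :
    ∀ᵐ ω ∂μ, Tendsto (fun n => Y n ω) atTop (𝓝 0) := by
  have hev : ∀ᵐ ω ∂μ, ∀ j : ℕ, ∀ᶠ n in atTop, ω ∉ {ω | 1 / ((j : ℝ) + 1) ≤ |Y n ω|} :=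
    ae_all_iff.2 fun j => ae_eventually_notMem (h _ (by positivity))
  filter_upwards [hev] with ω hω
  refine Metric.tendsto_nhds.2 fun ε hε => ?_
  obtain ⟨j, hj⟩ := exists_nat_one_div_lt hε
  filter_upwards [hω j] with n hn
  rw [Real.dist_eq, sub_zero]
  exact (not_le.1 hn).trans hj

section Independent

variable {Ω : Type*} [MeasurableSpace Ω] {P : Measure Ω} [IsProbabilityMeasure P]
  {X : ℕ → Ω → ℝ} {M : ℝ}

theorem variance_sum_range_le (hmeas : ∀ n, Measurable (X n)) (hindep : iIndepFun X P)
    (hbd : ∀ n ω, |X n ω| ≤ M) (n : ℕ) :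
    variance (∑ k ∈ range n, X k) P ≤ n * M ^ 2 := by
  rw [IndepFun.variance_sum (fun k _ => .of_bound (hmeas k).aestronglyMeasurable M
    (ae_of_all _ (hbd k))) fun i _ j _ hij => hindep.indepFun hij]
  calc ∑ k ∈ range n, variance (X k) P ≤ ∑ _k ∈ range n, M ^ 2 := by
        refine sum_le_sum fun k _ => ?_
        exact (variance_le_sq_of_bounded (ae_of_all _ fun ω => abs_le.1 (hbd k ω))
          (hmeas k).aemeasurable).trans_eq (by ring)
    _ = n * M ^ 2 := by simp

theorem ae_tendsto_sum_sq_sub_integral_div (hmeas : ∀ n, Measurable (X n))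
    (hindep : iIndepFun X P) (hbd : ∀ n ω, |X n ω| ≤ M) :
    ∀ᵐ ω ∂P, Tendsto (fun m : ℕ => (∑ k ∈ range (m ^ 2), (X k ω - ∫ ω', X k ω' ∂P)) /
      ((m ^ 2 : ℕ) : ℝ)) atTop (𝓝 0) := by
  refine ae_tendsto_zero_of_tsum_measure_le_abs_ne_top fun ε hε => ?_
  have hL2 : ∀ k, MemLp (X k) 2 P := fun k =>
    .of_bound (hmeas k).aestronglyMeasurable M (ae_of_all _ (hbd k))
  set S : ℕ → Ω → ℝ := fun n => ∑ k ∈ range n, X k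
  have hS : ∀ n ω, ∑ k ∈ range n, (X k ω - ∫ ω', X k ω' ∂P) = S n ω - P[S n] := by
    intro n ω
    simp only [S, Finset.sum_apply]
    rw [integral_finsetSum _ fun k _ => (hL2 k).integrable one_le_two, sum_sub_distrib]
  have hbound : ∀ m : ℕ, P {ω | ε ≤ |(∑ k ∈ range (m ^ 2), (X k ω - ∫ ω', X k ω' ∂P)) /
      ((m ^ 2 : ℕ) : ℝ)|} ≤ ENNReal.ofReal (M ^ 2 / ε ^ 2 * (1 / (m : ℝ) ^ 2)) := by
    intro m
    rcases Nat.eq_zero_or_pos m with rfl | hm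
    · simp [hε.not_ge] -- the quotient is `x / 0 = 0`, so the event is empty
    have hm2 : (0 : ℝ) < ((m ^ 2 : ℕ) : ℝ) := by positivity
    calc _ ≤ P {ω | ε * ((m ^ 2 : ℕ) : ℝ) ≤ |S (m ^ 2) ω - P[S (m ^ 2)]|} :=
          measure_mono fun ω hω => by
            simpa only [Set.mem_ofPred_eq, hS, abs_div, abs_of_pos hm2, le_div_iff₀ hm2] using hω
      _ ≤ ENNReal.ofReal (variance (S (m ^ 2)) P / (ε * ((m ^ 2 : ℕ) : ℝ)) ^ 2) :=
          meas_ge_le_variance_div_sq (memLp_finsetSum' _ fun k _ => hL2 k) (by positivity)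
      _ ≤ ENNReal.ofReal (M ^ 2 / ε ^ 2 * (1 / (m : ℝ) ^ 2)) := by
          refine ENNReal.ofReal_le_ofReal ?_
          calc variance (S (m ^ 2)) P / (ε * ((m ^ 2 : ℕ) : ℝ)) ^ 2
              ≤ ((m ^ 2 : ℕ) : ℝ) * M ^ 2 / (ε * ((m ^ 2 : ℕ) : ℝ)) ^ 2 := by
                gcongr
                exact variance_sum_range_le hmeas hindep hbd _
            _ = M ^ 2 / ε ^ 2 * (1 / (m : ℝ) ^ 2) := by
                push_cast
                field_simp
  refine ne_top_of_le_ne_top ?_ (ENNReal.tsum_le_tsum hbound)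
  rw [← ENNReal.ofReal_tsum_of_nonneg (fun m => by positivity)
    ((Real.summable_one_div_nat_pow.2 one_lt_two).mul_left _)]
  exact ENNReal.ofReal_ne_top

theorem ae_tendsto_sum_sub_integral_div (hmeas : ∀ n, Measurable (X n))
    (hindep : iIndepFun X P) (hbd : ∀ n ω, |X n ω| ≤ M) :
    ∀ᵐ ω ∂P, Tendsto (fun n : ℕ => (∑ k ∈ range n, (X k ω - ∫ ω', X k ω' ∂P)) / n)
      atTop (𝓝 0) := by
  have hcentered : ∀ k ω, |X k ω - ∫ ω', X k ω' ∂P| ≤ 2 * M := fun k ω => by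
    have := norm_integral_le_of_norm_le_const (μ := P) (f := X k) (ae_of_all _ (hbd k))
    simp only [Real.norm_eq_abs, probReal_univ, mul_one] at this
    linarith [abs_sub (X k ω) (∫ ω', X k ω' ∂P), hbd k ω]
  filter_upwards [ae_tendsto_sum_sq_sub_integral_div hmeas hindep hbd] with ω hω
  exact tendsto_sum_range_div_of_tendsto_sq (hcentered · ω) hω

end Independent

theorem stmt_8 {Ω : Type*} [MeasurableSpace Ω] (P : Measure Ω) [IsProbabilityMeasure P]
    (X : ℕ → Ω → ℝ) (hmeas : ∀ n, Measurable (X n))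
    (hindep : iIndepFun X P)
    (M : ℝ) (hbd : ∀ n ω, |X n ω| ≤ M)
    (hneg : ∀ n ω, X n ω ≤ 0)
    (hmean : Tendsto (fun n : ℕ => ∫ ω, X n ω ∂P) atTop (nhds 0)) :
    ∀ᵐ ω ∂P, ∃ n : ℕ → ℕ, StrictMono n ∧ (∀ j, 1 ≤ n j) ∧
      Tendsto (fun j : ℕ => (j : ℝ) / (n j : ℝ)) atTop (nhds 1) ∧
      Tendsto (fun j : ℕ => X (n j) ω) atTop (nhds 0) := by
  filter_upwards [ae_tendsto_sum_sub_integral_div hmeas hindep hbd] with ω hω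
  refine exists_strictMono_tendsto_zero_of_tendsto_sum_abs_div (b := fun k => X k ω) ?_
  have hsum := (hω.add hmean.cesaro).neg
  rw [add_zero, neg_zero] at hsum
  refine hsum.congr fun n => ?_
  simp only [abs_of_nonpos (hneg _ ω), sum_neg_distrib, sum_sub_distrib]
  ring
end

section
/- Let a = (a_1,...,a_d) ∈ ℂ^d be a random vector with i.i.d. coordinates of bounded density φ ≤ C, and let u ∈ ℂ^d with ‖u‖ = 1 and |u_1| ≥ 1/√d. Then for any measurable set A ⊂ ℂ, P{⟨a,u⟩ ∈ A} ≤ C·d·λ(A), where λ is Lebesgue measure on ℂ. -/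
/-!
Split off the coordinate `a j₀`: conditionally on the other coordinates, `⟨a,u⟩ ∈ A` says that
`a j₀` lies in an affine preimage of `A` under `x ↦ x u j₀ + b`, whose Lebesgue measure is
`λ(A) / |u j₀|² ≤ d λ(A)`. Since the law of `a j₀` is at most `C λ`, each conditional probability
is at most `C d λ(A)`, and integrating over the other coordinates keeps this bound.
-/

open MeasureTheory
open scoped ENNReal

theorem Complex.volume_preimage_mul_right {c : ℂ} (hc : c ≠ 0) (s : Set ℂ) :
    volume ((· * c) ⁻¹' s) = ENNReal.ofReal (Complex.normSq c)⁻¹ * volume s := by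
  have hdet : LinearMap.det (Algebra.lmul ℝ ℂ c) = Complex.normSq c := by
    rw [← Algebra.norm_apply, Algebra.norm_complex_apply]
  have hpre : (· * c) ⁻¹' s = Algebra.lmul ℝ ℂ c ⁻¹' s := by
    ext x
    simp [mul_comm]
  rw [hpre, Measure.addHaar_preimage_linearMap volume (hdet ▸ Complex.normSq_pos.mpr hc).ne',
    hdet, abs_of_nonneg (inv_nonneg.mpr (Complex.normSq_nonneg c))]

theorem Complex.volume_preimage_mul_add {c : ℂ} (hc : c ≠ 0) (b : ℂ) (s : Set ℂ) :
    volume {x : ℂ | x * c + b ∈ s} = ENNReal.ofReal (Complex.normSq c)⁻¹ * volume s := by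
  change volume ((· * c) ⁻¹' ((· + b) ⁻¹' s)) = _
  rw [Complex.volume_preimage_mul_right hc, measure_preimage_add_right]

theorem withDensity_le_smul {α : Type*} [MeasurableSpace α] (ν : Measure α) {f : α → ℝ≥0∞}
    {K : ℝ≥0∞} (hf : ∀ x, f x ≤ K) : ν.withDensity f ≤ K • ν :=
  withDensity_const (μ := ν) K ▸ withDensity_mono (Filter.Eventually.of_forall hf)

theorem Complex.inv_normSq_le_of_inv_sqrt_le_norm {c : ℂ} {d : ℝ} (hd : 0 < d)
    (hc : 1 / Real.sqrt d ≤ ‖c‖) : (Complex.normSq c)⁻¹ ≤ d := by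
  have hsqrt : 0 < 1 / Real.sqrt d := by positivity
  have hsq : 1 / d ≤ Complex.normSq c := by
    calc 1 / d = (1 / Real.sqrt d) ^ 2 := by rw [div_pow, one_pow, Real.sq_sqrt hd.le]
      _ ≤ ‖c‖ ^ 2 := pow_le_pow_left₀ hsqrt.le hc 2
      _ = Complex.normSq c := (Complex.normSq_eq_norm_sq c).symm
  rw [one_div] at hsq
  exact inv_le_of_inv_le₀ hd hsq

theorem pi_preimage_sum_mul_le {n : ℕ} (ν : Measure ℂ) [IsProbabilityMeasure ν] {K : ℝ≥0∞}
    (hν : ν ≤ K • volume) (u : Fin (n + 1) → ℂ) {j : Fin (n + 1)} (hu : u j ≠ 0)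
    {A : Set ℂ} (hA : MeasurableSet A) :
    Measure.pi (fun _ => ν) {a : Fin (n + 1) → ℂ | ∑ i, a i * u i ∈ A}
      ≤ K * ENNReal.ofReal (Complex.normSq (u j))⁻¹ * volume A := by
  set T : Set (ℂ × (Fin n → ℂ)) := {p | p.1 * u j + ∑ i, p.2 i * u (j.succAbove i) ∈ A}
  have hT : MeasurableSet T := hA.preimage (by fun_prop)
  have hsplit : {a : Fin (n + 1) → ℂ | ∑ i, a i * u i ∈ A}
      = MeasurableEquiv.piFinSuccAbove (fun _ => ℂ) j ⁻¹' T := by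
    ext a
    simp [T, Fin.sum_univ_succAbove _ j, Fin.removeNth]
  have hslice (y : Fin n → ℂ) :
      ν ((·, y) ⁻¹' T) ≤ K * ENNReal.ofReal (Complex.normSq (u j))⁻¹ * volume A :=
    calc ν ((·, y) ⁻¹' T) ≤ K * volume ((·, y) ⁻¹' T) := hν _
      _ = K * ENNReal.ofReal (Complex.normSq (u j))⁻¹ * volume A := by
        rw [mul_assoc, ← Complex.volume_preimage_mul_add hu (∑ i, y i * u (j.succAbove i))]
        rfl
  rw [hsplit, (measurePreserving_piFinSuccAbove (fun _ => ν) j).measure_preimage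
    hT.nullMeasurableSet, Measure.prod_apply_symm hT]
  exact (lintegral_mono hslice).trans (by simp)

theorem stmt_15_general (d : ℕ) (C : ℝ)
    (φ : ℂ → ℝ) (hφ : ∀ z, 0 ≤ φ z ∧ φ z ≤ C)
    (μ : Measure ℂ)
    (hμ : μ = volume.withDensity fun z => ENNReal.ofReal (φ z))
    (hprob : IsProbabilityMeasure μ)
    (u : Fin d → ℂ)
    (j₀ : Fin d) (hj₀ : 1 / Real.sqrt d ≤ ‖u j₀‖)
    (A : Set ℂ) (hA : MeasurableSet A) :
    (Measure.pi fun _ : Fin d => μ) {a : Fin d → ℂ | (∑ j, a j * u j) ∈ A}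
      ≤ ENNReal.ofReal C * (d : ℝ≥0∞) * volume A := by
  obtain ⟨n, rfl⟩ : ∃ n, d = n + 1 := Nat.exists_eq_succ_of_ne_zero j₀.pos.ne'
  have hd : (0 : ℝ) < (n + 1 : ℕ) := by positivity
  have hu : u j₀ ≠ 0 := by
    rintro h
    rw [h, norm_zero] at hj₀
    exact (one_div_pos.mpr (Real.sqrt_pos.mpr hd)).not_ge hj₀
  have hμ_le : μ ≤ ENNReal.ofReal C • volume :=
    hμ ▸ withDensity_le_smul volume fun z => ENNReal.ofReal_le_ofReal (hφ z).2
  calc _ ≤ ENNReal.ofReal C * ENNReal.ofReal (Complex.normSq (u j₀))⁻¹ * volume A :=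
        pi_preimage_sum_mul_le μ hμ_le u hu hA
    _ ≤ ENNReal.ofReal C * ((n + 1 : ℕ) : ℝ≥0∞) * volume A := by
        gcongr
        rw [← ENNReal.ofReal_natCast]
        exact ENNReal.ofReal_le_ofReal (Complex.inv_normSq_le_of_inv_sqrt_le_norm hd hj₀)

theorem stmt_15 (d : ℕ) (hd : 0 < d) (C : ℝ)
    (φ : ℂ → ℝ) (hφ : ∀ z, 0 ≤ φ z ∧ φ z ≤ C)
    (μ : Measure ℂ)
    (hμ : μ = volume.withDensity fun z => ENNReal.ofReal (φ z))
    (hprob : IsProbabilityMeasure μ)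
    (u : Fin d → ℂ) (hu : ∑ j, ‖u j‖ ^ 2 = 1)
    (j₀ : Fin d) (hj₀ : 1 / Real.sqrt d ≤ ‖u j₀‖)
    (A : Set ℂ) (hA : MeasurableSet A) :
    (Measure.pi fun _ : Fin d => μ) {a : Fin d → ℂ | (∑ j, a j * u j) ∈ A}
      ≤ ENNReal.ofReal C * (d : ℝ≥0∞) * volume A :=
  stmt_15_general d C φ hφ μ hμ hprob u j₀ hj₀ A hA
end
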